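/- For all propositional formulas α₁, …, αₙ and β: α₁, …, αₙ ⊢_Ł β (β is derivable from premises α₁, …, αₙ in Łukasiewicz's proof system) if and only if there exist distinct justification variables x₁, …, xₙ and a justification term t such that x₁:α₁, …, xₙ:αₙ ⊢_JLŁ t:β. -/

import Mathlib

/-- Propositional formulas built from countably many atoms with ¬ and →. -/
inductive PropForm : Type
  | atom : ℕ → PropForm
  | neg  : PropForm → PropForm
  | imp  : PropForm → PropForm → PropForm

/-- Łukasiewicz's Hilbert system: axioms L1, L2, L3 and modus ponens;
derivation from a set of premises `Γ`. -/
inductive LukDeriv : Set PropForm → PropForm → Prop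
  | prem {Γ φ} : φ ∈ Γ → LukDeriv Γ φ
  | ax1 {Γ} (φ ψ : PropForm) : LukDeriv Γ (φ.imp (ψ.imp φ))
  | ax2 {Γ} (φ ψ χ : PropForm) :
      LukDeriv Γ ((φ.imp (ψ.imp χ)).imp ((φ.imp ψ).imp (φ.imp χ)))
  | ax3 {Γ} (φ ψ : PropForm) :
      LukDeriv Γ (((φ.neg).imp (ψ.neg)).imp (ψ.imp φ))
  | mp {Γ φ ψ} : LukDeriv Γ (φ.imp ψ) → LukDeriv Γ φ → LukDeriv Γ ψ

/-- Justification terms: constants, variables, application and sum. -/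
inductive JTerm : Type
  | const : ℕ → JTerm
  | var   : ℕ → JTerm
  | app   : JTerm → JTerm → JTerm
  | sum   : JTerm → JTerm → JTerm

/-- Justification formulas: propositional formulas extended with `t : φ`. -/
inductive JForm : Type
  | atom : ℕ → JForm
  | neg  : JForm → JForm
  | imp  : JForm → JForm → JForm
  | just : JTerm → JForm → JForm

/-- Embedding of propositional formulas into justification formulas. -/
def PropForm.toJ : PropForm → JForm
  | .atom n  => .atom n
  | .neg φ   => .neg φ.toJ
  | .imp φ ψ => .imp φ.toJ ψ.toJ

/-- Schematic constant specification: a distinguished constant for each of the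
three Łukasiewicz axiom schemes. -/
def c1 : JTerm := .const 1
def c2 : JTerm := .const 2
def c3 : JTerm := .const 3

/-- The system JLŁ: the Application and Sum axioms, justified Łukasiewicz axioms
(with schematic constant specification `c1, c2, c3`), modus ponens and
application introduction; derivation from a set of premises `Γ`. -/
inductive JLDeriv : Set JForm → JForm → Prop
  | prem {Γ φ} : φ ∈ Γ → JLDeriv Γ φ
  | appAx {Γ} (s t : JTerm) (φ ψ : JForm) :
      JLDeriv Γ ((JForm.just s (φ.imp ψ)).imp
        ((JForm.just t φ).imp (JForm.just (s.app t) ψ)))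
  | sumL {Γ} (s t : JTerm) (ψ : JForm) :
      JLDeriv Γ ((JForm.just s ψ).imp (JForm.just (s.sum t) ψ))
  | sumR {Γ} (s t : JTerm) (ψ : JForm) :
      JLDeriv Γ ((JForm.just t ψ).imp (JForm.just (s.sum t) ψ))
  | jax1 {Γ} (φ ψ : JForm) :
      JLDeriv Γ (JForm.just c1 (φ.imp (ψ.imp φ)))
  | jax2 {Γ} (φ ψ χ : JForm) :
      JLDeriv Γ (JForm.just c2 ((φ.imp (ψ.imp χ)).imp ((φ.imp ψ).imp (φ.imp χ))))
  | jax3 {Γ} (φ ψ : JForm) :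
      JLDeriv Γ (JForm.just c3 (((φ.neg).imp (ψ.neg)).imp (ψ.imp φ)))
  | mp {Γ φ ψ} : JLDeriv Γ (φ.imp ψ) → JLDeriv Γ φ → JLDeriv Γ ψ
  | appIntro {Γ} {s t : JTerm} {φ ψ : JForm} :
      JLDeriv Γ (JForm.just s (φ.imp ψ)) → JLDeriv Γ (JForm.just t φ) →
      JLDeriv Γ (JForm.just (s.app t) ψ)

/-!
Forgetting justifications (`t:φ ↦ φ`) turns every JLŁ axiom into an Łukasiewicz axiom or an
instance of `φ → φ`, and application introduction into modus ponens; this gives the direction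
from right to left. Conversely, a Łukasiewicz derivation is internalised step by step: axioms are
justified by `c₁, c₂, c₃`, the premise `αᵢ` by the variable `xᵢ`, and modus ponens by application.
-/

def JForm.forget : JForm → PropForm
  | .atom n => .atom n
  | .neg φ => .neg φ.forget
  | .imp φ ψ => .imp φ.forget ψ.forget
  | .just _ φ => φ.forget

@[simp]
lemma PropForm.forget_toJ (φ : PropForm) : φ.toJ.forget = φ := by
  induction φ <;> simp [PropForm.toJ, JForm.forget, *]

lemma LukDeriv.imp_self (Γ : Set PropForm) (φ : PropForm) : LukDeriv Γ (φ.imp φ) :=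
  ((LukDeriv.ax2 φ (φ.imp φ) φ).mp (LukDeriv.ax1 φ (φ.imp φ))).mp (LukDeriv.ax1 φ φ)

lemma JLDeriv.forget {Γ : Set JForm} {φ : JForm} (h : JLDeriv Γ φ) :
    LukDeriv (JForm.forget '' Γ) φ.forget := by
  induction h with
  | prem h => exact .prem ⟨_, h, rfl⟩
  | appAx | sumL | sumR => exact LukDeriv.imp_self _ _
  | jax1 => exact .ax1 _ _
  | jax2 => exact .ax2 _ _ _
  | jax3 => exact .ax3 _ _
  | mp _ _ ih₁ ih₂ | appIntro _ _ ih₁ ih₂ => exact ih₁.mp ih₂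

lemma LukDeriv.exists_justification {Γ : Set PropForm} {Δ : Set JForm} {β : PropForm}
    (hΓ : ∀ γ ∈ Γ, ∃ t, JLDeriv Δ (.just t γ.toJ)) (h : LukDeriv Γ β) :
    ∃ t, JLDeriv Δ (.just t β.toJ) := by
  induction h with
  | prem h => exact hΓ _ h
  | ax1 => exact ⟨c1, .jax1 _ _⟩
  | ax2 => exact ⟨c2, .jax2 _ _ _⟩
  | ax3 => exact ⟨c3, .jax3 _ _⟩
  | mp _ _ ih₁ ih₂ =>
      obtain ⟨s, hs⟩ := ih₁
      obtain ⟨t, ht⟩ := ih₂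
      exact ⟨s.app t, hs.appIntro ht⟩

lemma JForm.forget_image_range_just {ι : Type*} (x : ι → JTerm) (α : ι → PropForm) :
    JForm.forget '' Set.range (fun i => JForm.just (x i) (α i).toJ) = Set.range α := by
  rw [← Set.range_comp]
  congr 1
  funext i
  simp [JForm.forget]

/-- `α₁, …, αₙ ⊢_Ł β` iff there are distinct justification variables
`x₁, …, xₙ` and a term `t` with `x₁:α₁, …, xₙ:αₙ ⊢_JLŁ t:β`. -/
theorem luk_iff_justified_from_premises (n : ℕ) (α : Fin n → PropForm) (β : PropForm) :
    LukDeriv (Set.range α) β ↔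
      ∃ x : Fin n → ℕ, Function.Injective x ∧
        ∃ t : JTerm,
          JLDeriv (Set.range fun i => JForm.just (JTerm.var (x i)) (α i).toJ)
            (JForm.just t β.toJ) := by
  constructor
  · intro h
    refine ⟨Fin.val, Fin.val_injective, h.exists_justification ?_⟩
    rintro _ ⟨i, rfl⟩
    exact ⟨.var i, .prem ⟨i, rfl⟩⟩
  · rintro ⟨x, -, t, ht⟩
    simpa [JForm.forget, JForm.forget_image_range_just] using ht.forget
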